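/- arXiv:math/9809040 — 6 statements merged into one kernel-verified Lean document; each statement's English description precedes it below -/
import Mathlib

section
/- Let A be a unital C*-algebra and τ₀ a weight on A. Then the semicontinuous regularization τ(a) := sup{ψ(a) : ψ a positive linear functional on A with ψ ≤ τ₀ on A₊} satisfies: (i) τ is a weight on A₊ (additive and positively homogeneous) and is lower semicontinuous with respect to the norm topology on A₊; (ii) τ ≤ τ₀ on A₊, so every positive element with τ₀(a) < ∞ also satisfies τ(a) < ∞. -/
open scoped ENNReal

variable {A : Type*} [CStarAlgebra A] [PartialOrder A] [StarOrderedRing A]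

/-- A weight on a C*-algebra: `τ(λa + b) = λ τ(a) + τ(b)` for `λ > 0` and positive `a, b`. -/
def IsWeight (τ : A → ℝ≥0∞) : Prop :=
  ∀ (c : ℝ), 0 < c → ∀ a b : A, 0 ≤ a → 0 ≤ b →
    τ ((c : ℂ) • a + b) = ENNReal.ofReal c * τ a + τ b

/-- A positive linear functional: it takes nonnegative real values on positive elements. -/
def IsPosFunctional (ψ : A →ₗ[ℂ] ℂ) : Prop :=
  ∀ a : A, 0 ≤ a → ∃ r : ℝ, 0 ≤ r ∧ ψ a = r

/-- `ψ ≤ τ₀` on the positive cone. -/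
def DomBy (ψ : A →ₗ[ℂ] ℂ) (τ₀ : A → ℝ≥0∞) : Prop :=
  ∀ a : A, 0 ≤ a → ENNReal.ofReal (ψ a).re ≤ τ₀ a

/-- The semicontinuous regularization `τ(a) = sup {ψ(a) : ψ positive linear functional, ψ ≤ τ₀}`. -/
noncomputable def reg (τ₀ : A → ℝ≥0∞) (a : A) : ℝ≥0∞ :=
  ⨆ (ψ : A →ₗ[ℂ] ℂ) (_ : IsPosFunctional ψ ∧ DomBy ψ τ₀), ENNReal.ofReal (ψ a).re

/-! Only the superadditivity `c τ(a) + τ(b) ≤ τ(c a + b)` needs work. Given positive functionals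
`φ, ψ ≤ τ₀` and `δ > 0`, put `x = c a + b` and `F = (c φ(a) + ψ(b)) / (1 + δ)`; a positive
`ω ≤ τ₀` with `F ≤ ω(x)` comes from M. Riesz's extension theorem on `A_sa × ℝ`, applied to the cone
generated by the epigraph of `τ₀`, by `(-x, -F)` and by `(1, R)` with
`R = (1 + δ⁻¹) (φ(1) + ψ(1)) / (1 + δ)`. That the cone meets `0 × ℝ` only
in `0 × [0, ∞)` is the estimate `φ(p) + ψ(q) ≤ (1 + δ) t + (1 + δ⁻¹) γ (φ(1) + ψ(1))` for
`p + q ≤ u + γ` and `τ₀(u) ≤ t`. To prove it, write `1 = X + Y` with `X = u (u + γ)⁻¹`: then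
`X (u + γ) X ≤ u` is paid for by `τ₀`, `Y (u + γ) Y ≤ γ` by the unit, and
`p ≤ (1 + δ) X p X + (1 + δ⁻¹) Y p Y`. Lower semicontinuity holds because positive functionals
are continuous. -/

open scoped ComplexOrder
open Filter Topology

lemma exists_linearMap_le_of_pointedCone {E : Type*} [AddCommGroup E] [Module ℝ E]
    (C : PointedCone ℝ (E × ℝ)) (hC₀ : ∀ r, ((0 : E), r) ∈ C → 0 ≤ r)
    (hC : ∀ z, ∃ r, (z, r) ∈ C) : ∃ ℓ : E →ₗ[ℝ] ℝ, ∀ z r, (z, r) ∈ C → ℓ z ≤ r := by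
  obtain ⟨g, hg, hgC⟩ := riesz_extension C
    ((LinearMap.snd ℝ E ℝ).toPMap (LinearMap.range (LinearMap.inr ℝ E ℝ)))
    (fun ⟨_, r, hr⟩ hrC => by subst hr; exact hC₀ r hrC)
    (fun ⟨z, s⟩ => by
      obtain ⟨r, hr⟩ := hC z
      exact ⟨⟨(0, r - s), r - s, rfl⟩, by simpa using hr⟩)
  have hg_inr : ∀ r, g (0, r) = r := fun r => hg ⟨(0, r), r, rfl⟩
  refine ⟨-(g ∘ₗ LinearMap.inl ℝ E ℝ), fun z r hzr => ?_⟩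
  have := hgC (z, r) hzr
  rw [← add_zero z, ← zero_add r, ← Prod.mk_add_mk, map_add, hg_inr] at this
  change -g (z, 0) ≤ r
  linarith

lemma extendRCLike_comp_realPart_apply {E : Type*} [AddCommGroup E] [Module ℂ E]
    [StarAddMonoid E] [StarModule ℂ E] (ℓ : selfAdjoint E →ₗ[ℝ] ℝ) {a : E}
    (ha : IsSelfAdjoint a) :
    Module.Dual.extendRCLike (𝕜 := ℂ) (ℓ ∘ₗ realPart) a = (ℓ ⟨a, ha⟩ : ℂ) := by
  have : realPart a = ⟨a, ha⟩ := Subtype.ext ha.coe_realPart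
  simp [Module.Dual.extendRCLike_apply, this, ha.imaginaryPart]

section Regularization

variable {B : Type*} [CStarAlgebra B] [PartialOrder B] {τ : B → ℝ≥0∞}

namespace IsWeight

lemma map_add (hτ : IsWeight τ) {x y : B} (hx : 0 ≤ x) (hy : 0 ≤ y) :
    τ (x + y) = τ x + τ y := by
  simpa using hτ 1 one_pos x y hx hy

lemma map_zero_of_ne_top (hτ : IsWeight τ) {u : B} (hu : 0 ≤ u) (hu_fin : τ u ≠ ⊤) : τ 0 = 0 := by
  have h := hτ.map_add hu le_rfl
  rw [add_zero] at h
  exact ((ENNReal.add_right_inj hu_fin).1 (by rw [add_zero]; exact h)).symm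

lemma map_smul (hτ : IsWeight τ) {u : B} (hu : 0 ≤ u) (hu_fin : τ u ≠ ⊤) {c : ℝ}
    (hc : 0 < c) : τ (c • u) = ENNReal.ofReal c * τ u := by
  simpa [hτ.map_zero_of_ne_top hu hu_fin, Complex.coe_smul] using hτ c hc u 0 hu le_rfl

end IsWeight

/-- The pairs `(0, t)` are included even when `τ 0 = ⊤`, so that this is always a cone. -/
def weightEpigraph (τ : B → ℝ≥0∞) : Set (B × ℝ) :=
  {p | 0 ≤ p.1 ∧ 0 ≤ p.2 ∧ (p.1 = 0 ∨ τ p.1 ≤ ENNReal.ofReal p.2)}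

lemma zero_mem_weightEpigraph : (0, 0) ∈ weightEpigraph τ :=
  ⟨le_rfl, le_rfl, .inl rfl⟩

lemma IsPosFunctional.re_nonneg {ψ : B →ₗ[ℂ] ℂ} (hψ : IsPosFunctional ψ) {a : B} (ha : 0 ≤ a) :
    0 ≤ (ψ a).re := by
  obtain ⟨r, hr, h⟩ := hψ a ha
  simpa [h] using hr

lemma ofReal_re_le_reg {ψ : B →ₗ[ℂ] ℂ} (hψ : IsPosFunctional ψ) (hψτ : DomBy ψ τ) (a : B) :
    ENNReal.ofReal (ψ a).re ≤ reg τ a :=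
  le_iSup₂ (f := fun ψ (_ : IsPosFunctional ψ ∧ DomBy ψ τ) => ENNReal.ofReal (ψ a).re) ψ ⟨hψ, hψτ⟩

lemma reg_le {a : B} (ha : 0 ≤ a) : reg τ a ≤ τ a :=
  iSup₂_le fun _ hψ => hψ.2 a ha

lemma reg_smul_add_le {a b : B} (ha : 0 ≤ a) (hb : 0 ≤ b) {c : ℝ} (hc : 0 ≤ c) :
    reg τ (c • a + b) ≤ ENNReal.ofReal c * reg τ a + reg τ b := by
  refine iSup₂_le fun ψ ⟨hψ, hψτ⟩ => ?_
  have : (ψ (c • a + b)).re = c * (ψ a).re + (ψ b).re := by simp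
  rw [this, ENNReal.ofReal_add (mul_nonneg hc (hψ.re_nonneg ha)) (hψ.re_nonneg hb),
    ENNReal.ofReal_mul hc]
  gcongr <;> exact ofReal_re_le_reg hψ hψτ _

variable [StarOrderedRing B]

lemma IsWeight.mono (hτ : IsWeight τ) {x y : B} (hx : 0 ≤ x) (hxy : x ≤ y) :
    τ x ≤ τ y := by
  rw [← add_sub_cancel x y, hτ.map_add hx (sub_nonneg.2 hxy)]
  exact le_self_add

lemma IsWeight.add_mem_weightEpigraph (hτ : IsWeight τ) {p q : B × ℝ}
    (hp : p ∈ weightEpigraph τ) (hq : q ∈ weightEpigraph τ) : p + q ∈ weightEpigraph τ := by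
  obtain ⟨hp₁, hp₂, hp⟩ := hp
  obtain ⟨hq₁, hq₂, hq⟩ := hq
  refine ⟨add_nonneg hp₁ hq₁, add_nonneg hp₂ hq₂, ?_⟩
  rcases hp with hp | hp
  · simpa [hp] using
      hq.imp_right fun h => h.trans (ENNReal.ofReal_le_ofReal (le_add_of_nonneg_left hp₂))
  rcases hq with hq | hq
  · refine .inr ?_
    simpa [hq] using hp.trans (ENNReal.ofReal_le_ofReal (le_add_of_nonneg_right hq₂))
  · refine .inr ?_
    rw [Prod.fst_add, Prod.snd_add, hτ.map_add hp₁ hq₁, ENNReal.ofReal_add hp₂ hq₂]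
    exact add_le_add hp hq

lemma IsWeight.smul_mem_weightEpigraph (hτ : IsWeight τ) {p : B × ℝ}
    (hp : p ∈ weightEpigraph τ) {c : ℝ} (hc : 0 ≤ c) : c • p ∈ weightEpigraph τ := by
  obtain ⟨hp₁, hp₂, hp⟩ := hp
  refine ⟨smul_nonneg hc hp₁, mul_nonneg hc hp₂, ?_⟩
  rcases hc.eq_or_lt with rfl | hc
  · simp
  rcases hp with hp | hp
  · simp [hp]
  · refine .inr ?_
    rw [Prod.smul_fst, Prod.smul_snd, smul_eq_mul, ENNReal.ofReal_mul hc.le,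
      hτ.map_smul hp₁ (ne_top_of_le_ne_top ENNReal.ofReal_ne_top hp) hc]
    gcongr

lemma IsPosFunctional.re_mono {ψ : B →ₗ[ℂ] ℂ} (hψ : IsPosFunctional ψ) {x y : B} (hxy : x ≤ y) :
    (ψ x).re ≤ (ψ y).re := by
  simpa using hψ.re_nonneg (sub_nonneg.2 hxy)

lemma IsPosFunctional.continuous_re {ψ : B →ₗ[ℂ] ℂ} (hψ : IsPosFunctional ψ) :
    Continuous fun x => (ψ x).re := by
  refine Complex.continuous_re.comp (map_continuous (PositiveLinearMap.mk₀ ψ fun a ha => ?_))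
  obtain ⟨r, hr, h⟩ := hψ a ha
  simpa [h] using hr

lemma exists_isSelfAdjoint_add_eq_one_conj_le {u : B} (hu : 0 ≤ u) {γ : ℝ} (hγ : 0 < γ) :
    ∃ X Y : B, IsSelfAdjoint X ∧ IsSelfAdjoint Y ∧ X + Y = 1 ∧
      X * (u + γ • 1) * X ≤ u ∧ Y * (u + γ • 1) * Y ≤ γ • 1 := by
  have hspec : ∀ s ∈ spectrum ℝ u, 0 ≤ s := fun s hs => spectrum_nonneg_of_nonneg hu hs
  have hinv : ContinuousOn (fun s : ℝ => (s + γ)⁻¹) (spectrum ℝ u) :=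
    ContinuousOn.inv₀ (f := fun s => s + γ) (by fun_prop) fun s hs => by linarith [hspec s hs]
  have hX : ContinuousOn (fun s : ℝ => s * (s + γ)⁻¹) (spectrum ℝ u) := continuousOn_id.mul hinv
  have hY : ContinuousOn (fun s : ℝ => γ * (s + γ)⁻¹) (spectrum ℝ u) :=
    continuousOn_const.mul hinv
  have hconj : ∀ f : ℝ → ℝ, ContinuousOn f (spectrum ℝ u) →
      cfc f u * (u + γ • 1) * cfc f u = cfc (fun s => f s * (s + γ) * f s) u := fun f hf => by
    rw [cfc_mul (fun s => f s * (s + γ)) f u (hf.mul (by fun_prop)) hf,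
      cfc_mul f (fun s => s + γ) u hf (by fun_prop),
      cfc_add u (fun s => s) (fun _ => γ), cfc_id' ℝ u, cfc_const γ u,
      Algebra.algebraMap_eq_smul_one]
  refine ⟨cfc (fun s : ℝ => s * (s + γ)⁻¹) u, cfc (fun s : ℝ => γ * (s + γ)⁻¹) u,
    cfc_predicate _ _, cfc_predicate _ _, ?_, ?_, ?_⟩
  · rw [← cfc_add u _ _ hX hY, ← cfc_const_one ℝ u]
    refine cfc_congr fun s hs => ?_
    have := hspec s hs
    field_simp
  · rw [hconj _ hX]
    conv_rhs => rw [← cfc_id' ℝ u]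
    refine cfc_mono (fun s hs => ?_) ((hX.mul (by fun_prop)).mul hX)
    have := hspec s hs
    field_simp
    nlinarith
  · rw [hconj _ hY, ← Algebra.algebraMap_eq_smul_one, ← cfc_const γ u]
    refine cfc_mono (fun s hs => ?_) ((hY.mul (by fun_prop)).mul hY)
    have := hspec s hs
    field_simp
    nlinarith

/-- The difference of the two sides is `δ⁻¹ • star (δ • X - Y) * p * (δ • X - Y)`. -/
lemma le_smul_conj_add_smul_conj {p X Y : B} (hp : 0 ≤ p) (hXY : X + Y = 1) {δ : ℝ}
    (hδ : 0 < δ) : p ≤ (1 + δ) • (star X * p * X) + (1 + δ⁻¹) • (star Y * p * Y) := by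
  rw [← sub_nonneg]
  convert smul_nonneg (inv_pos.2 hδ).le (star_left_conjugate_nonneg hp (δ • X - Y)) using 1
  have hp : p = star (X + Y) * p * (X + Y) := by rw [hXY, star_one, one_mul, mul_one]
  nth_rewrite 3 [hp]
  simp only [star_add, star_sub, star_smul, star_trivial, sub_mul, mul_sub, add_mul, mul_add,
    smul_mul_assoc, mul_smul_comm, smul_sub, smul_smul]
  match_scalars <;> field_simp <;> ring

lemma IsPosFunctional.re_le_of_add_eq_one {ψ : B →ₗ[ℂ] ℂ} (hψ : IsPosFunctional ψ) {p X Y : B}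
    (hp : 0 ≤ p) (hX : IsSelfAdjoint X) (hY : IsSelfAdjoint Y) (hXY : X + Y = 1) {δ : ℝ}
    (hδ : 0 < δ) :
    (ψ p).re ≤ (1 + δ) * (ψ (X * p * X)).re + (1 + δ⁻¹) * (ψ (Y * p * Y)).re := by
  simpa [hX.star_eq, hY.star_eq] using hψ.re_mono (le_smul_conj_add_smul_conj hp hXY hδ)

lemma re_add_re_le_of_le_add_smul_one {φ ψ : B →ₗ[ℂ] ℂ} (hφ : IsPosFunctional φ)
    (hψ : IsPosFunctional ψ) {p q u : B} (hp : 0 ≤ p) (hq : 0 ≤ q) (hu : 0 ≤ u) {γ t δ : ℝ}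
    (hγ : 0 ≤ γ) (hδ : 0 < δ) (hpq : p + q ≤ u + γ • 1)
    (hut : ∀ p' q' : B, 0 ≤ p' → 0 ≤ q' → p' + q' ≤ u → (φ p').re + (ψ q').re ≤ t) :
    (φ p).re + (ψ q).re ≤ (1 + δ) * t + (1 + δ⁻¹) * (γ * ((φ 1).re + (ψ 1).re)) := by
  have ht : 0 ≤ t := by simpa using hut 0 0 le_rfl le_rfl (by simpa using hu)
  rcases hγ.eq_or_lt with rfl | hγ
  · have := hut p q hp hq (by simpa using hpq)
    simp only [zero_mul, mul_zero, add_zero]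
    nlinarith
  obtain ⟨X, Y, hX, hY, hXY, hXu, hYγ⟩ := exists_isSelfAdjoint_add_eq_one_conj_le hu hγ
  have hXpq : (φ (X * p * X)).re + (ψ (X * q * X)).re ≤ t := by
    refine hut _ _ (hX.conjugate_nonneg hp) (hX.conjugate_nonneg hq) ?_
    rw [← add_mul, ← mul_add]
    exact (hX.conjugate_le_conjugate hpq).trans hXu
  have hYp : (φ (Y * p * Y)).re ≤ γ * (φ 1).re := by
    simpa using hφ.re_mono
      ((hY.conjugate_le_conjugate ((le_add_of_nonneg_right hq).trans hpq)).trans hYγ)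
  have hYq : (ψ (Y * q * Y)).re ≤ γ * (ψ 1).re := by
    simpa using hψ.re_mono
      ((hY.conjugate_le_conjugate ((le_add_of_nonneg_left hp).trans hpq)).trans hYγ)
  have hφp := hφ.re_le_of_add_eq_one hp hX hY hXY hδ
  have hψq := hψ.re_le_of_add_eq_one hq hX hY hXY hδ
  calc (φ p).re + (ψ q).re
      ≤ (1 + δ) * ((φ (X * p * X)).re + (ψ (X * q * X)).re)
        + (1 + δ⁻¹) * ((φ (Y * p * Y)).re + (ψ (Y * q * Y)).re) := by linarith
    _ ≤ (1 + δ) * t + (1 + δ⁻¹) * (γ * (φ 1).re + γ * (ψ 1).re) := by gcongr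
    _ = (1 + δ) * t + (1 + δ⁻¹) * (γ * ((φ 1).re + (ψ 1).re)) := by ring

lemma re_add_re_le_of_mem_weightEpigraph (hτ : IsWeight τ) {φ ψ : B →ₗ[ℂ] ℂ}
    (hφ : IsPosFunctional φ) (hφτ : DomBy φ τ) (hψ : IsPosFunctional ψ) (hψτ : DomBy ψ τ)
    {e : B × ℝ} (he : e ∈ weightEpigraph τ) {p q : B} (hp : 0 ≤ p) (hq : 0 ≤ q)
    (hpq : p + q ≤ e.1) : (φ p).re + (ψ q).re ≤ e.2 := by
  obtain ⟨-, he₂, he₁ | heτ⟩ := he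
  · rw [he₁] at hpq
    have hp₀ : p = 0 := le_antisymm ((le_add_of_nonneg_right hq).trans hpq) hp
    have hq₀ : q = 0 := le_antisymm ((le_add_of_nonneg_left hp).trans hpq) hq
    simpa [hp₀, hq₀] using he₂
  · rw [← ENNReal.ofReal_le_ofReal_iff he₂, ENNReal.ofReal_add (hφ.re_nonneg hp) (hψ.re_nonneg hq)]
    calc ENNReal.ofReal (φ p).re + ENNReal.ofReal (ψ q).re ≤ τ p + τ q :=
          add_le_add (hφτ p hp) (hψτ q hq)
      _ = τ (p + q) := (hτ.map_add hp hq).symm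
      _ ≤ τ e.1 := hτ.mono (add_nonneg hp hq) hpq
      _ ≤ ENNReal.ofReal e.2 := heτ

/-- A linear functional `ℓ` with `ℓ z ≤ r` on this cone is positive, dominated by `τ`, and
satisfies `F ≤ ℓ x`. -/
def separationCone (hτ : IsWeight τ) (x : B) (F R : ℝ) : PointedCone ℝ (selfAdjoint B × ℝ) where
  carrier := {p | ∃ e ∈ weightEpigraph τ, ∃ α γ : ℝ, 0 ≤ α ∧ 0 ≤ γ ∧
    (p.1 : B) + α • x ≤ e.1 + γ • 1 ∧ e.2 + γ * R ≤ p.2 + α * F}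
  zero_mem' := ⟨0, zero_mem_weightEpigraph, 0, 0, le_rfl, le_rfl, by simp, by simp⟩
  add_mem' := by
    rintro p q ⟨e, he, α, γ, hα, hγ, hp₁, hp₂⟩ ⟨e', he', α', γ', hα', hγ', hq₁, hq₂⟩
    refine ⟨e + e', hτ.add_mem_weightEpigraph he he', α + α', γ + γ', add_nonneg hα hα',
      add_nonneg hγ hγ', ?_, ?_⟩
    · simpa [add_smul, add_add_add_comm] using add_le_add hp₁ hq₁
    · simp only [Prod.snd_add]
      linarith
  smul_mem' := by
    rintro ⟨c, hc⟩ p ⟨e, he, α, γ, hα, hγ, hp₁, hp₂⟩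
    refine ⟨c • e, hτ.smul_mem_weightEpigraph he hc, c * α, c * γ, mul_nonneg hc hα,
      mul_nonneg hc hγ, ?_, ?_⟩
    · simpa [smul_add, mul_smul] using smul_le_smul_of_nonneg_left hp₁ hc
    · simp only [Prod.smul_snd, Nonneg.mk_smul, smul_eq_mul]
      nlinarith

lemma exists_posFunctional_domBy_le_re (hτ : IsWeight τ) {x : B} (hx : IsSelfAdjoint x) {F R : ℝ}
    (hFR : ∀ e ∈ weightEpigraph τ, ∀ α γ : ℝ, 0 ≤ α → 0 ≤ γ → α • x ≤ e.1 + γ • 1 →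
      α * F ≤ e.2 + γ * R) :
    ∃ ω : B →ₗ[ℂ] ℂ, IsPosFunctional ω ∧ DomBy ω τ ∧ F ≤ (ω x).re := by
  obtain ⟨ℓ, hℓ⟩ := exists_linearMap_le_of_pointedCone (separationCone hτ x F R)
    (fun r ⟨e, he, α, γ, hα, hγ, h₁, h₂⟩ => by
      have := hFR e he α γ hα hγ (by simpa using h₁)
      linarith)
    (fun z => ⟨‖(z : B)‖ * R, 0, zero_mem_weightEpigraph, 0, ‖(z : B)‖, le_rfl, norm_nonneg _,
      by simpa [Algebra.algebraMap_eq_smul_one] using z.2.le_algebraMap_norm_self, by simp⟩)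
  have hω := fun a (ha : IsSelfAdjoint a) => extendRCLike_comp_realPart_apply ℓ ha
  have hpos : ∀ a (ha : 0 ≤ a), 0 ≤ ℓ ⟨a, .of_nonneg ha⟩ := fun a ha => by
    have := hℓ (-⟨a, .of_nonneg ha⟩) 0
      ⟨0, zero_mem_weightEpigraph, 0, 0, le_rfl, le_rfl, by simpa using ha, by simp⟩
    simpa using this
  refine ⟨Module.Dual.extendRCLike (ℓ ∘ₗ realPart), fun a ha => ⟨_, hpos a ha, hω a _⟩,
    fun a ha => ?_, ?_⟩
  · rw [hω a (.of_nonneg ha), Complex.ofReal_re]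
    obtain hτa | hτa := eq_or_ne (τ a) ⊤
    · simp [hτa]
    rw [← ENNReal.ofReal_toReal hτa]
    refine ENNReal.ofReal_le_ofReal (hℓ _ _ ⟨(a, (τ a).toReal), ?_, 0, 0, le_rfl, le_rfl, ?_, ?_⟩)
    · exact ⟨ha, ENNReal.toReal_nonneg, .inr (ENNReal.ofReal_toReal hτa).ge⟩
    · simp
    · simp
  · rw [hω x hx, Complex.ofReal_re]
    have := hℓ (-⟨x, hx⟩) (-F)
      ⟨0, zero_mem_weightEpigraph, 1, 0, zero_le_one, le_rfl, by simp, by simp⟩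
    simpa using this

lemma exists_posFunctional_domBy_div_le_re_smul_add (hτ : IsWeight τ) {a b : B} (ha : 0 ≤ a)
    (hb : 0 ≤ b) {c : ℝ} (hc : 0 ≤ c) {φ ψ : B →ₗ[ℂ] ℂ} (hφ : IsPosFunctional φ)
    (hφτ : DomBy φ τ) (hψ : IsPosFunctional ψ) (hψτ : DomBy ψ τ) {δ : ℝ} (hδ : 0 < δ) :
    ∃ ω : B →ₗ[ℂ] ℂ, IsPosFunctional ω ∧ DomBy ω τ ∧
      (c * (φ a).re + (ψ b).re) / (1 + δ) ≤ (ω (c • a + b)).re := by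
  refine exists_posFunctional_domBy_le_re hτ (.of_nonneg (add_nonneg (smul_nonneg hc ha) hb))
    (R := (1 + δ⁻¹) * ((φ 1).re + (ψ 1).re) / (1 + δ)) fun e he α γ hα hγ hx => ?_
  have := re_add_re_le_of_le_add_smul_one hφ hψ (smul_nonneg (mul_nonneg hα hc) ha)
    (smul_nonneg hα hb) he.1 hγ hδ (by simpa [smul_add, mul_smul] using hx)
    fun _ _ hp hq hpq => re_add_re_le_of_mem_weightEpigraph hτ hφ hφτ hψ hψτ he hp hq hpq
  simp only [LinearMap.map_smul_of_tower, Complex.real_smul, Complex.re_ofReal_mul] at this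
  calc α * ((c * (φ a).re + (ψ b).re) / (1 + δ))
      = (α * c * (φ a).re + α * (ψ b).re) / (1 + δ) := by ring
    _ ≤ ((1 + δ) * e.2 + (1 + δ⁻¹) * (γ * ((φ 1).re + (ψ 1).re))) / (1 + δ) := by gcongr
    _ = e.2 + γ * ((1 + δ⁻¹) * ((φ 1).re + (ψ 1).re) / (1 + δ)) := by field_simp

lemma le_reg_smul_add (hτ : IsWeight τ) {a b : B} (ha : 0 ≤ a) (hb : 0 ≤ b) {c : ℝ}
    (hc : 0 ≤ c) : ENNReal.ofReal c * reg τ a + reg τ b ≤ reg τ (c • a + b) := by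
  have hzero : ∃ ψ : B →ₗ[ℂ] ℂ, IsPosFunctional ψ ∧ DomBy ψ τ :=
    ⟨0, fun _ _ => ⟨0, le_rfl, by simp⟩, fun _ _ => by simp⟩
  simp only [reg, ENNReal.mul_iSup]
  refine ENNReal.biSup_add_biSup_le' hzero hzero fun φ ⟨hφ, hφτ⟩ ψ ⟨hψ, hψτ⟩ => ?_
  rw [← ENNReal.ofReal_mul hc,
    ← ENNReal.ofReal_add (mul_nonneg hc (hφ.re_nonneg ha)) (hψ.re_nonneg hb)]
  set V := c * (φ a).re + (ψ b).re
  have hlim : Tendsto (fun δ : ℝ => ENNReal.ofReal (V / (1 + δ))) (𝓝[>] 0)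
      (𝓝 (ENNReal.ofReal V)) := by
    refine tendsto_nhdsWithin_of_tendsto_nhds ((ENNReal.continuous_ofReal.tendsto V).comp ?_)
    have : ContinuousAt (fun δ : ℝ => V / (1 + δ)) 0 := by fun_prop (disch := norm_num)
    simpa using this.tendsto
  refine le_of_tendsto hlim ?_
  filter_upwards [self_mem_nhdsWithin] with δ hδ
  obtain ⟨ω, hω, hωτ, hle⟩ :=
    exists_posFunctional_domBy_div_le_re_smul_add hτ ha hb hc hφ hφτ hψ hψτ hδ
  exact (ENNReal.ofReal_le_ofReal hle).trans (ofReal_re_le_reg hω hωτ _)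

lemma IsWeight.reg (hτ : IsWeight τ) : IsWeight (reg τ) := fun c hc a b ha hb => by
  rw [Complex.coe_smul]
  exact (reg_smul_add_le ha hb hc.le).antisymm (le_reg_smul_add hτ ha hb hc.le)

lemma lowerSemicontinuous_reg : LowerSemicontinuous (reg τ) :=
  lowerSemicontinuous_biSup fun _ hψ =>
    (ENNReal.continuous_ofReal.comp hψ.1.continuous_re).lowerSemicontinuous

end Regularization

/-- Corollary 3.3.2: the semicontinuous regularization of a weight is a weight, it is
lower semicontinuous on the positive cone, and is dominated by the original weight
(in particular its domain contains the domain of the original weight). -/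
theorem stmt4 (τ₀ : A → ℝ≥0∞) (hτ₀ : IsWeight τ₀) :
    IsWeight (reg τ₀) ∧
    LowerSemicontinuousOn (reg τ₀) {a : A | 0 ≤ a} ∧
    (∀ a : A, 0 ≤ a → reg τ₀ a ≤ τ₀ a) ∧
    (∀ a : A, 0 ≤ a → τ₀ a < ⊤ → reg τ₀ a < ⊤) :=
  ⟨hτ₀.reg, lowerSemicontinuous_reg.lowerSemicontinuousOn _, fun _ ha => reg_le ha,
    fun _ ha h => (reg_le ha).trans_lt h⟩
end

section
/- Let A be a unital C*-algebra, A₀ ⊆ A a dense *-subalgebra, and τ₀ a weight on A which is ε-invariant for δ-unitaries in A₀. Then the semicontinuous regularization τ(a) := sup{ψ(a) : ψ a positive linear functional on A with ψ ≤ τ₀ on A₊} is also ε-invariant for δ-unitaries in A₀: for every ε ∈ (0,1) there is δ > 0 such that (1−ε)τ(a) ≤ τ(UaU*) ≤ (1+ε)τ(a) for every δ-unitary U ∈ A₀ and every a ∈ A₊. -/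
open scoped ENNReal

variable {A : Type*} [CStarAlgebra A] [PartialOrder A] [StarOrderedRing A]

/-- A `δ`-unitary: `‖U*U − 1‖ < δ` and `‖UU* − 1‖ < δ`. -/
def IsDeltaUnitary (δ : ℝ) (U : A) : Prop :=
  ‖star U * U - 1‖ < δ ∧ ‖U * star U - 1‖ < δ

/-- `τ` is ε-invariant for δ-unitaries in the dense *-subalgebra `A₀`. -/
def EpsInvariant (A₀ : StarSubalgebra ℂ A) (τ : A → ℝ≥0∞) : Prop :=
  ∀ ε : ℝ, 0 < ε → ε < 1 → ∃ δ : ℝ, 0 < δ ∧ ∀ U ∈ A₀, IsDeltaUnitary δ U →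
    ∀ a : A, 0 ≤ a →
      ENNReal.ofReal (1 - ε) * τ a ≤ τ (U * a * star U) ∧
      τ (U * a * star U) ≤ ENNReal.ofReal (1 + ε) * τ a

/-!
Conjugating a positive functional `ψ ≤ τ₀` by a `δ`-unitary `W ∈ A₀` gives `(1+ε)⁻¹ ψ(W · W*)`,
again a positive functional below `τ₀`; this is the upper bound. For the lower bound, `U⁻¹`
is again an approximate unitary, hence a limit of `δ`-unitaries of `A₀`, and the regularization,
a supremum of continuous functions, is lower semicontinuous. So the upper bound passes to
`W = U⁻¹`, giving `τ(a) ≤ (1+ε) τ(UaU*)`, and `(1-ε)(1+ε) ≤ 1`.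
-/

open scoped ComplexOrder
open Filter Topology

lemma isPosFunctional_iff {A : Type*} [CStarAlgebra A] [PartialOrder A] {ψ : A →ₗ[ℂ] ℂ} :
    IsPosFunctional ψ ↔ ∀ a : A, 0 ≤ a → 0 ≤ ψ a := by
  refine forall₂_congr fun a _ => ⟨?_, fun h => ⟨(ψ a).re, (Complex.nonneg_iff.1 h).1, ?_⟩⟩
  · rintro ⟨r, hr, h⟩
    exact h ▸ Complex.zero_le_real.2 hr
  · exact Complex.eq_re_of_ofReal_le (r := 0) (by simpa using h)

lemma IsPosFunctional.continuous {ψ : A →ₗ[ℂ] ℂ} (hψ : IsPosFunctional ψ) : Continuous ψ :=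
  map_continuous (PositiveLinearMap.mk₀ ψ (isPosFunctional_iff.1 hψ))

lemma lowerSemicontinuous_reg_s5 (τ₀ : A → ℝ≥0∞) : LowerSemicontinuous (reg τ₀) :=
  lowerSemicontinuous_iSup fun _ => lowerSemicontinuous_iSup fun hψ =>
    (ENNReal.continuous_ofReal.comp
      (Complex.continuous_re.comp hψ.1.continuous)).lowerSemicontinuous

lemma reg_conj_le {τ₀ : A → ℝ≥0∞} {W : A} {c : ℝ} (hc : 0 < c)
    (hW : ∀ b : A, 0 ≤ b → τ₀ (W * b * star W) ≤ ENNReal.ofReal c * τ₀ b) (a : A) :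
    reg τ₀ (W * a * star W) ≤ ENNReal.ofReal c * reg τ₀ a := by
  refine iSup₂_le fun ψ hψ => ?_
  set φ : A →ₗ[ℂ] ℂ := ((c⁻¹ : ℝ) : ℂ) • ψ ∘ₗ LinearMap.mulLeftRight ℂ (W, star W)
  have hφ (x : A) : (φ x).re = c⁻¹ * (ψ (W * x * star W)).re := by
    simp [φ, LinearMap.mulLeftRight_apply]
  have hφ_pos : IsPosFunctional φ := isPosFunctional_iff.2 fun b hb => by
    simp only [φ, LinearMap.smul_apply, LinearMap.comp_apply, LinearMap.mulLeftRight_apply,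
      smul_eq_mul]
    exact mul_nonneg (by simpa using hc.le)
      (isPosFunctional_iff.1 hψ.1 _ (star_right_conjugate_nonneg hb W))
  have hφ_dom : DomBy φ τ₀ := fun b hb => by
    rw [hφ, ENNReal.ofReal_mul (by positivity)]
    calc ENNReal.ofReal c⁻¹ * ENNReal.ofReal (ψ (W * b * star W)).re
        ≤ ENNReal.ofReal c⁻¹ * (ENNReal.ofReal c * τ₀ b) := by
          gcongr
          exact (hψ.2 _ (star_right_conjugate_nonneg hb W)).trans (hW b hb)
      _ = τ₀ b := by
          rw [← mul_assoc, ← ENNReal.ofReal_mul (by positivity), inv_mul_cancel₀ hc.ne',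
            ENNReal.ofReal_one, one_mul]
  calc ENNReal.ofReal (ψ (W * a * star W)).re = ENNReal.ofReal c * ENNReal.ofReal (φ a).re := by
        rw [hφ, ← ENNReal.ofReal_mul hc.le, mul_inv_cancel_left₀ hc.ne']
    _ ≤ ENNReal.ofReal c * reg τ₀ a := by
        gcongr
        exact le_iSup₂ (f := fun ψ (_ : IsPosFunctional ψ ∧ DomBy ψ τ₀) =>
          ENNReal.ofReal (ψ a).re) φ ⟨hφ_pos, hφ_dom⟩

lemma reg_conj_le_of_mem_closure {τ₀ : A → ℝ≥0∞} {S : Set A} {c : ℝ} (hc : 0 < c)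
    (hS : ∀ W ∈ S, ∀ b : A, 0 ≤ b → τ₀ (W * b * star W) ≤ ENNReal.ofReal c * τ₀ b)
    {V : A} (hV : V ∈ closure S) (a : A) :
    reg τ₀ (V * a * star V) ≤ ENNReal.ofReal c * reg τ₀ a := by
  have hclosed : IsClosed {W : A | reg τ₀ (W * a * star W) ≤ ENNReal.ofReal c * reg τ₀ a} :=
    ((lowerSemicontinuous_reg_s5 τ₀).comp (by fun_prop : Continuous fun W : A => W * a * star W))
      |>.isClosed_preimage _
  exact closure_minimal (fun W hW => reg_conj_le hc (hS W hW) a) hclosed hV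

lemma IsDeltaUnitary.mono {A : Type*} [CStarAlgebra A] {δ δ' : ℝ} {U : A}
    (h : IsDeltaUnitary δ U) (hδ : δ ≤ δ') : IsDeltaUnitary δ' U :=
  ⟨h.1.trans_le hδ, h.2.trans_le hδ⟩

lemma isOpen_setOf_isDeltaUnitary {A : Type*} [CStarAlgebra A] (δ : ℝ) :
    IsOpen {U : A | IsDeltaUnitary δ U} := by
  simp only [IsDeltaUnitary, Set.ofPred_and]
  exact (isOpen_lt (by fun_prop) continuous_const).inter (isOpen_lt (by fun_prop) continuous_const)

lemma isUnit_of_isUnit_mul_of_isUnit_mul {M : Type*} [Monoid M] {x y : M}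
    (hxy : IsUnit (x * y)) (hyx : IsUnit (y * x)) : IsUnit x := by
  obtain ⟨u, hu⟩ := hxy
  obtain ⟨v, hv⟩ := hyx
  have hleft : (↑v⁻¹ * y) * x = 1 := by rw [mul_assoc, ← hv, Units.inv_mul]
  have hright : x * (y * ↑u⁻¹) = 1 := by rw [← mul_assoc, ← hu, Units.mul_inv]
  exact isUnit_iff_exists.2 ⟨_, hright, left_inv_eq_right_inv hleft hright ▸ hleft⟩

lemma Units.star_inv_mul_inv {R : Type*} [MonoidWithZero R] [StarMul R] (u : Rˣ) :
    star (↑u⁻¹ : R) * ↑u⁻¹ = Ring.inverse ((u : R) * star (u : R)) := by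
  simpa [mul_inv_rev, Units.coe_star_inv] using (Ring.inverse_unit (u * star u)).symm

lemma Units.inv_mul_star_inv {R : Type*} [MonoidWithZero R] [StarMul R] (u : Rˣ) :
    ↑u⁻¹ * star (↑u⁻¹ : R) = Ring.inverse (star (u : R) * u) := by
  simpa [mul_inv_rev, Units.coe_star_inv] using (Ring.inverse_unit (star u * u)).symm

lemma ENNReal.ofReal_one_sub_mul_le {ε : ℝ} (hε : 0 ≤ ε) {x y : ℝ≥0∞}
    (h : x ≤ ENNReal.ofReal (1 + ε) * y) : ENNReal.ofReal (1 - ε) * x ≤ y :=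
  calc ENNReal.ofReal (1 - ε) * x ≤ ENNReal.ofReal (1 - ε) * (ENNReal.ofReal (1 + ε) * y) := by
        gcongr
    _ = ENNReal.ofReal ((1 - ε) * (1 + ε)) * y := by
        rw [← mul_assoc, ENNReal.ofReal_mul' (by linarith)]
    _ ≤ y := mul_le_of_le_one_left' (ENNReal.ofReal_le_one.2 (by nlinarith))

-- `(U⁻¹)* U⁻¹ = (U U*)⁻¹`, and inversion is continuous at `1`.
lemma exists_isDeltaUnitary_inv {A : Type*} [CStarAlgebra A] {δ₀ : ℝ} (hδ₀ : 0 < δ₀) :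
    ∃ δ > 0, ∀ U : A, IsDeltaUnitary δ U → ∃ u : Aˣ, ↑u = U ∧ IsDeltaUnitary δ₀ (↑u⁻¹ : A) := by
  have hunit : ∀ᶠ x in 𝓝 (1 : A), IsUnit x := Units.isOpen.eventually_mem isUnit_one
  have hinv : ∀ᶠ x in 𝓝 (1 : A), dist (Ring.inverse x) 1 < δ₀ := by
    simpa using (NormedRing.inverse_continuousAt (1 : Aˣ)).eventually
      (Metric.ball_mem_nhds (Ring.inverse (1 : A)) hδ₀)
  obtain ⟨δ, hδ, hball⟩ := Metric.eventually_nhds_iff.1 (hunit.and hinv)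
  refine ⟨δ, hδ, fun U hU => ?_⟩
  obtain ⟨h₁, h₁'⟩ := hball (y := star U * U) (by rw [dist_eq_norm]; exact hU.1)
  obtain ⟨h₂, h₂'⟩ := hball (y := U * star U) (by rw [dist_eq_norm]; exact hU.2)
  obtain ⟨u, rfl⟩ := isUnit_of_isUnit_mul_of_isUnit_mul h₂ h₁
  refine ⟨u, rfl, ?_, ?_⟩
  · rw [Units.star_inv_mul_inv, ← dist_eq_norm]; exact h₂'
  · rw [Units.inv_mul_star_inv, ← dist_eq_norm]; exact h₁'

theorem stmt5_general (A₀ : StarSubalgebra ℂ A) (hdense : Dense (A₀ : Set A))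
    (τ₀ : A → ℝ≥0∞) (hinv : EpsInvariant A₀ τ₀) :
    EpsInvariant A₀ (reg τ₀) := by
  intro ε hε hε1
  obtain ⟨δ₀, hδ₀, hτ₀⟩ := hinv ε hε hε1
  obtain ⟨δ, hδ, hU_inv⟩ := exists_isDeltaUnitary_inv (A := A) hδ₀
  refine ⟨min δ δ₀, lt_min hδ hδ₀, fun U hU hUδ a _ => ⟨?_, ?_⟩⟩
  · obtain ⟨u, rfl, hu⟩ := hU_inv U (hUδ.mono (min_le_left _ _))
    have hmem : (↑u⁻¹ : A) ∈ closure ({W | IsDeltaUnitary δ₀ W} ∩ A₀) :=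
      hdense.open_subset_closure_inter (isOpen_setOf_isDeltaUnitary δ₀) hu
    have hle : reg τ₀ a ≤ ENNReal.ofReal (1 + ε) * reg τ₀ (↑u * a * star ↑u) := by
      have := reg_conj_le_of_mem_closure (by linarith : 0 < 1 + ε)
        (fun W hW b hb => (hτ₀ W hW.2 hW.1 b hb).2) hmem (↑u * a * star ↑u)
      rwa [show (↑u⁻¹ : A) * (↑u * a * star ↑u) * star ↑u⁻¹ = a by
        simp [mul_assoc, ← star_mul]] at this
    exact ENNReal.ofReal_one_sub_mul_le hε.le hle
  · exact reg_conj_le (by linarith)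
      (fun b hb => (hτ₀ U hU (hUδ.mono (min_le_right _ _)) b hb).2) a

/-- Proposition 3.3.3: the semicontinuous regularization of a weight which is ε-invariant
for δ-unitaries in a dense *-subalgebra is again ε-invariant for δ-unitaries. -/
theorem stmt5 (A₀ : StarSubalgebra ℂ A) (hdense : Dense (A₀ : Set A))
    (τ₀ : A → ℝ≥0∞) (hτ₀ : IsWeight τ₀) (hinv : EpsInvariant A₀ τ₀) :
    EpsInvariant A₀ (reg τ₀) :=
  stmt5_general A₀ hdense τ₀ hinv
end

section
/- Let X and Y be nonempty metric spaces, and equip X × Y with the metric δ((x₁,y₁),(x₂,y₂)) := max{δ_X(x₁,x₂), δ_Y(y₁,y₂)}. Then d∞(X × Y) ≤ d∞(X) + d∞(Y). -/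
/-!
In the sup metric the ball of radius `R` about `(x, y)` is the product of the balls about `x`
and `y`, and covers of two sets by `r`- and `r'`-balls multiply to a cover of their product by
`max r r'`-balls. Hence `n_{max r r'}(B((x,y),R)) ≤ n_r(B(x,R)) · n_{r'}(B(y,R))`; taking
logarithms, dividing by `log R`, passing to the limsup in `R` and then to the infimum over
`r, r'` bounds `d∞` at `(x, y)` by the sum of `d∞` at `x` and at `y`.
-/

open Metric Filter Topology Set

/-- Logarithm of an extended natural number, valued in `EReal` (`⊤` for `⊤`). -/
noncomputable def elog (n : ℕ∞) : EReal :=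
  if n = ⊤ then ⊤ else ((Real.log (n.toNat : ℝ) : ℝ) : EReal)

/-- `coverNum r Ω` : the least number of open balls of radius `r` needed to cover `Ω`,
valued in `ℕ∞` (it is `⊤` if no finite cover exists). -/
noncomputable def coverNum {X : Type*} [MetricSpace X] (r : ℝ) (Ω : Set X) : ℕ∞ :=
  sInf ((fun s : Finset X => (s.card : ℕ∞)) ''
    {s : Finset X | Ω ⊆ ⋃ x ∈ s, Metric.ball x r})

/-- The asymptotic dimension with base point `x`:
`d∞(X) = lim_{r→∞} limsup_{R→∞} log n_r(B(x,R)) / log R`; the limit in `r` exists since the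
inner expression is nonincreasing in `r`, hence equals the infimum over `r > 0`. -/
noncomputable def asympDim {X : Type*} [MetricSpace X] (x : X) : EReal :=
  ⨅ (r : ℝ) (_ : 0 < r),
    Filter.limsup (fun R : ℝ => ((Real.log R)⁻¹ : EReal) * elog (coverNum r (Metric.ball x R)))
      Filter.atTop

/-- The asymptotic dimension of a metric space (independent of the base point). -/
noncomputable def asympDimSpace (X : Type*) [MetricSpace X] : EReal :=
  ⨆ x : X, asympDim x

lemma EReal.ne_bot_of_nonneg {a : EReal} (h : 0 ≤ a) : a ≠ ⊥ :=
  ne_bot_of_le_ne_bot EReal.zero_ne_bot h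

lemma elog_nonneg (n : ℕ∞) : 0 ≤ elog n := by
  unfold elog
  split_ifs
  · exact le_top
  · exact EReal.coe_nonneg.2 (Real.log_natCast_nonneg _)

lemma elog_ne_bot (n : ℕ∞) : elog n ≠ ⊥ :=
  EReal.ne_bot_of_nonneg (elog_nonneg n)

lemma elog_natCast (k : ℕ) : elog k = (Real.log k : EReal) := by
  simp [elog]

lemma elog_zero : elog 0 = 0 := by simp [elog]

lemma elog_top : elog ⊤ = ⊤ := by simp [elog]

lemma elog_mono : Monotone elog := by
  intro m n hmn
  rcases eq_or_ne n ⊤ with rfl | hn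
  · exact elog_top ▸ le_top
  lift n to ℕ using hn
  lift m to ℕ using ne_top_of_le_ne_top (ENat.natCast_ne_top n) hmn
  rw [elog_natCast, elog_natCast, EReal.coe_le_coe_iff]
  rcases Nat.eq_zero_or_pos m with rfl | hm
  · simpa using Real.log_natCast_nonneg n
  · exact Real.log_le_log (by exact_mod_cast hm) (by exact_mod_cast hmn)

lemma elog_mul_le (m n : ℕ∞) : elog (m * n) ≤ elog m + elog n := by
  rcases eq_or_ne m 0 with rfl | hm0
  · simpa [elog_zero] using elog_nonneg n
  rcases eq_or_ne n 0 with rfl | hn0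
  · simpa [elog_zero] using elog_nonneg m
  rcases eq_or_ne m ⊤ with rfl | hm
  · simp [elog_top, EReal.top_add_of_ne_bot (elog_ne_bot n)]
  rcases eq_or_ne n ⊤ with rfl | hn
  · simp [elog_top, EReal.add_top_of_ne_bot (elog_ne_bot m)]
  lift m to ℕ using hm
  lift n to ℕ using hn
  rw [← Nat.cast_mul, elog_natCast, elog_natCast, elog_natCast, ← EReal.coe_add, Nat.cast_mul,
    Real.log_mul (by exact_mod_cast hm0) (by exact_mod_cast hn0)]

section coverNum

variable {X Y : Type*} [MetricSpace X] [MetricSpace Y]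

lemma coverNum_le_card {r : ℝ} {Ω : Set X} {s : Finset X} (h : Ω ⊆ ⋃ x ∈ s, ball x r) :
    coverNum r Ω ≤ s.card :=
  sInf_le ⟨s, h, rfl⟩

lemma coverNum_empty (r : ℝ) : coverNum r (∅ : Set X) = 0 :=
  nonpos_iff_eq_zero.1 <| (coverNum_le_card (s := ∅) (empty_subset _)).trans_eq (by simp)

lemma exists_cover_card_eq_coverNum {r : ℝ} {Ω : Set X} (h : coverNum r Ω ≠ ⊤) :
    ∃ s : Finset X, Ω ⊆ ⋃ x ∈ s, ball x r ∧ (s.card : ℕ∞) = coverNum r Ω := by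
  have hne : ((fun s : Finset X => (s.card : ℕ∞)) ''
      {s : Finset X | Ω ⊆ ⋃ x ∈ s, ball x r}).Nonempty :=
    Set.nonempty_iff_ne_empty.2 fun he => h (by rw [coverNum, he, sInf_empty])
  obtain ⟨s, hs, hcard⟩ := csInf_mem hne
  exact ⟨s, hs, hcard⟩

lemma coverNum_ne_zero {r : ℝ} {Ω : Set X} (hΩ : Ω.Nonempty) : coverNum r Ω ≠ 0 := by
  intro h
  obtain ⟨s, hs, hcard⟩ := exists_cover_card_eq_coverNum (h ▸ ENat.zero_ne_top)
  rw [h, Nat.cast_eq_zero, Finset.card_eq_zero] at hcard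
  obtain ⟨x, hx⟩ := hΩ
  simpa [hcard] using hs hx

lemma coverNum_prod_le_card_mul_card {r r' : ℝ} {A : Set X} {B : Set Y} {s : Finset X}
    {t : Finset Y} (hs : A ⊆ ⋃ x ∈ s, ball x r) (ht : B ⊆ ⋃ y ∈ t, ball y r') :
    coverNum (max r r') (A ×ˢ B) ≤ s.card * t.card := by
  refine (coverNum_le_card (s := s ×ˢ t) ?_).trans_eq (by simp)
  rintro ⟨a, b⟩ ⟨ha, hb⟩
  obtain ⟨x, hx, hax⟩ := mem_iUnion₂.1 (hs ha)
  obtain ⟨y, hy, hby⟩ := mem_iUnion₂.1 (ht hb)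
  refine mem_iUnion₂.2 ⟨(x, y), Finset.mem_product.2 ⟨hx, hy⟩, ?_⟩
  rw [mem_ball, Prod.dist_eq]
  exact max_lt_max hax hby

lemma coverNum_prod_le (r r' : ℝ) (A : Set X) (B : Set Y) :
    coverNum (max r r') (A ×ˢ B) ≤ coverNum r A * coverNum r' B := by
  rcases A.eq_empty_or_nonempty with rfl | hA
  · simp [coverNum_empty]
  rcases B.eq_empty_or_nonempty with rfl | hB
  · simp [coverNum_empty]
  rcases eq_or_ne (coverNum r A) ⊤ with hAtop | hAtop
  · simp [hAtop, ENat.top_mul (coverNum_ne_zero hB)]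
  rcases eq_or_ne (coverNum r' B) ⊤ with hBtop | hBtop
  · simp [hBtop, ENat.mul_top (coverNum_ne_zero hA)]
  obtain ⟨s, hs, hsA⟩ := exists_cover_card_eq_coverNum hAtop
  obtain ⟨t, ht, htB⟩ := exists_cover_card_eq_coverNum hBtop
  rw [← hsA, ← htB]
  exact coverNum_prod_le_card_mul_card hs ht

end coverNum

section coverGrowth

variable {X Y : Type*} [MetricSpace X] [MetricSpace Y]

noncomputable def coverGrowth (x : X) (r : ℝ) : EReal :=
  limsup (fun R : ℝ => ((Real.log R)⁻¹ : EReal) * elog (coverNum r (ball x R))) atTop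

lemma asympDim_eq_iInf_coverGrowth (x : X) : asympDim x = ⨅ (r : ℝ) (_ : 0 < r), coverGrowth x r :=
  rfl

lemma inv_log_nonneg {R : ℝ} (hR : 1 ≤ R) : 0 ≤ ((Real.log R)⁻¹ : EReal) :=
  EReal.inv_nonneg_of_nonneg (EReal.coe_nonneg.2 (Real.log_nonneg hR))

lemma coverGrowth_nonneg (x : X) (r : ℝ) : 0 ≤ coverGrowth x r := by
  refine (limsup_const (f := atTop) (0 : EReal)).symm.le.trans (limsup_le_limsup ?_)
  filter_upwards [eventually_ge_atTop 1] with R hR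
  exact mul_nonneg (inv_log_nonneg hR) (elog_nonneg _)

lemma asympDim_nonneg (x : X) : 0 ≤ asympDim x :=
  le_iInf₂ fun r _ => coverGrowth_nonneg x r

lemma coverGrowth_prod_le (x : X) (y : Y) (r r' : ℝ) :
    coverGrowth (x, y) (max r r') ≤ coverGrowth x r + coverGrowth y r' := by
  refine (limsup_le_limsup ?_).trans (EReal.limsup_add_le
    (.inl (EReal.ne_bot_of_nonneg (coverGrowth_nonneg x r)))
    (.inr (EReal.ne_bot_of_nonneg (coverGrowth_nonneg y r'))))
  filter_upwards [eventually_ge_atTop 1] with R hR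
  rw [← ball_prod_same, Pi.add_apply,
    ← EReal.left_distrib_of_nonneg (elog_nonneg _) (elog_nonneg _)]
  exact mul_le_mul_of_nonneg_left
    ((elog_mono (coverNum_prod_le r r' _ _)).trans (elog_mul_le _ _)) (inv_log_nonneg hR)

lemma asympDim_prod_le (x : X) (y : Y) : asympDim (x, y) ≤ asympDim x + asympDim y := by
  refine EReal.le_add_of_forall_gt (.inl (EReal.ne_bot_of_nonneg (asympDim_nonneg x)))
    (.inr (EReal.ne_bot_of_nonneg (asympDim_nonneg y))) fun a ha b hb => ?_
  simp only [asympDim_eq_iInf_coverGrowth, gt_iff_lt, iInf_lt_iff, exists_prop] at ha hb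
  obtain ⟨r, hr, hra⟩ := ha
  obtain ⟨r', hr', hrb⟩ := hb
  calc asympDim (x, y) ≤ coverGrowth (x, y) (max r r') := iInf₂_le _ (lt_max_of_lt_left hr)
    _ ≤ coverGrowth x r + coverGrowth y r' := coverGrowth_prod_le x y r r'
    _ ≤ a + b := add_le_add hra.le hrb.le

end coverGrowth

theorem stmt13_general {X Y : Type*} [MetricSpace X] [MetricSpace Y] :
    asympDimSpace (X × Y) ≤ asympDimSpace X + asympDimSpace Y :=
  iSup_le fun ⟨x, y⟩ => (asympDim_prod_le x y).trans
    (add_le_add (le_iSup asympDim x) (le_iSup asympDim y))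

/-- Theorem 1.2.5 (iii): `d∞(X × Y) ≤ d∞(X) + d∞(Y)`, where `X × Y` carries the sup metric
`δ((x₁,y₁),(x₂,y₂)) = max (δ_X x₁ x₂) (δ_Y y₁ y₂)` (the default product metric). -/
theorem stmt13 {X Y : Type*} [MetricSpace X] [MetricSpace Y] [Nonempty X] [Nonempty Y] :
    asympDimSpace (X × Y) ≤ asympDimSpace X + asympDimSpace Y :=
  stmt13_general
end

section
/- Let (X,δ) be a metric space carrying a uniformly bounded Borel measure μ. Then every ball of X is totally bounded; in particular, if X is complete then X is locally compact. -/
open Metric Filter Topology Set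

/-- A uniformly bounded Borel measure: for every `r > 0` the volumes of balls of radius `r`
are bounded away from `0` and from `∞`, uniformly in the centre. -/
def UnifBounded {X : Type*} [MetricSpace X] [MeasurableSpace X]
    (μ : MeasureTheory.Measure X) : Prop :=
  ∀ r : ℝ, 0 < r →
    (0 < ⨅ x : X, μ (Metric.ball x r)) ∧ (⨆ x : X, μ (Metric.ball x r)) < ⊤

private theorem stmt15_key {X : Type*} [MetricSpace X] [MeasurableSpace X] [BorelSpace X]
    (μ : MeasureTheory.Measure X) (hμ : UnifBounded μ) (x : X) (R : ℝ) :
    TotallyBounded (Metric.ball x R) := by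
  classical
  rcases le_or_gt R 0 with hR | hR
  · rw [Metric.ball_eq_empty.2 hR]; exact totallyBounded_empty
  rw [Metric.totallyBounded_iff]
  intro ε hε
  by_contra hcon
  push_neg at hcon
  have H : ∀ t : Finset X, ∃ y, y ∈ Metric.ball x R ∧ y ∉ ⋃ z ∈ t, Metric.ball z ε := by
    intro t
    have := hcon (t : Set X) t.finite_toSet
    rw [Set.not_subset] at this
    obtain ⟨y, hy1, hy2⟩ := this
    exact ⟨y, hy1, hy2⟩
  let pick : Finset X → X := fun t => (H t).choose
  let v : ℕ → Finset X := fun n => Nat.rec ∅ (fun _ t => insert (pick t) t) n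
  let u : ℕ → X := fun n => pick (v n)
  have hv_succ : ∀ n, v (n + 1) = insert (u n) (v n) := fun n => rfl
  have hu_mem : ∀ n, u n ∈ Metric.ball x R := fun n => (H (v n)).choose_spec.1
  have hu_not : ∀ n, u n ∉ ⋃ z ∈ v n, Metric.ball z ε := by
    intro n
    exact (H (v n)).choose_spec.2
  have hv_mono : ∀ {m n : ℕ}, m ≤ n → v m ⊆ v n := by
    intro m n h
    induction h with
    | refl => exact Finset.Subset.refl _
    | step _ ih => exact ih.trans (by rw [hv_succ]; exact Finset.subset_insert _ _)
  have hmem : ∀ {i j : ℕ}, i < j → u i ∈ v j := by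
    intro i j h
    exact hv_mono h (by rw [hv_succ]; exact Finset.mem_insert_self _ _)
  have hdist : ∀ {i j : ℕ}, i < j → ε ≤ dist (u j) (u i) := by
    intro i j h
    by_contra hlt
    push_neg at hlt
    exact hu_not j (Set.mem_biUnion (hmem h) (Metric.mem_ball.2 hlt))
  have hdisj : Pairwise (Function.onFun Disjoint fun i => Metric.ball (u i) (ε / 2)) := by
    intro i j hij
    wlog hij' : i < j generalizing i j
    · exact (this hij.symm (by omega)).symm
    refine Set.disjoint_left.2 fun y hyi hyj => ?_
    have : dist (u j) (u i) < ε := by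
      calc dist (u j) (u i) ≤ dist (u j) y + dist y (u i) := dist_triangle _ _ _
        _ < ε / 2 + ε / 2 := by
            rw [Metric.mem_ball] at hyi hyj
            rw [dist_comm (u j) y]
            exact add_lt_add hyj hyi
        _ = ε := by ring
    exact absurd (hdist hij') (not_le.2 this)
  obtain ⟨hc, -⟩ := hμ (ε / 2) (by linarith)
  obtain ⟨-, hM⟩ := hμ (R + ε / 2) (by linarith)
  set c := ⨅ y : X, μ (Metric.ball y (ε / 2)) with hc_def
  set M := ⨆ y : X, μ (Metric.ball y (R + ε / 2)) with hM_def
  have hbound : ∀ n : ℕ, (n : ENNReal) * c ≤ M := by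
    intro n
    have h1 : (n : ENNReal) * c ≤ ∑ i ∈ Finset.range n, μ (Metric.ball (u i) (ε / 2)) := by
      calc (n : ENNReal) * c = ∑ _i ∈ Finset.range n, c := by
            rw [Finset.sum_const, Finset.card_range, nsmul_eq_mul]
        _ ≤ _ := Finset.sum_le_sum fun i _ => iInf_le _ (u i)
    have h2 : ∑ i ∈ Finset.range n, μ (Metric.ball (u i) (ε / 2))
        = μ (⋃ i ∈ Finset.range n, Metric.ball (u i) (ε / 2)) := by
      rw [MeasureTheory.measure_biUnion_finset
        (fun i _ j _ hij => hdisj hij) (fun i _ => measurableSet_ball)]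
    have h3 : (⋃ i ∈ Finset.range n, Metric.ball (u i) (ε / 2)) ⊆
        Metric.ball x (R + ε / 2) := by
      refine Set.iUnion₂_subset fun i _ => fun y hy => ?_
      rw [Metric.mem_ball] at hy ⊢
      have := hu_mem i
      rw [Metric.mem_ball] at this
      calc dist y x ≤ dist y (u i) + dist (u i) x := dist_triangle _ _ _
        _ < ε / 2 + R := add_lt_add hy this
        _ = R + ε / 2 := by ring
    calc (n : ENNReal) * c ≤ μ (Metric.ball x (R + ε / 2)) :=
          h1.trans (h2.le.trans (MeasureTheory.measure_mono h3))
      _ ≤ M := le_iSup (fun y => μ (Metric.ball y (R + ε / 2))) x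
  have hcne : c ≠ 0 := hc.ne'
  have hMne : M ≠ ⊤ := hM.ne
  obtain ⟨n, hn⟩ := ENNReal.exists_nat_gt (show M / c ≠ ⊤ by
    simp [ENNReal.div_eq_top, hcne, hMne])
  have : M < (n : ENNReal) * c := (ENNReal.div_lt_iff (Or.inl hcne) (Or.inr hMne)).1 hn
  exact absurd (hbound n) (not_le.2 this)

/-- Proposition 1.2.13: if `(X,δ)` carries a uniformly bounded Borel measure then every
ball is totally bounded; in particular, if `X` is complete then it is locally compact. -/
theorem stmt15 {X : Type*} [MetricSpace X] [MeasurableSpace X] [BorelSpace X]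
    (μ : MeasureTheory.Measure X) (hμ : UnifBounded μ) :
    (∀ (x : X) (R : ℝ), TotallyBounded (Metric.ball x R)) ∧
    (CompleteSpace X → LocallyCompactSpace X) := by
  refine ⟨stmt15_key μ hμ, fun hX => ?_⟩
  constructor
  intro x n hn
  obtain ⟨ε, hε, hball⟩ := Metric.mem_nhds_iff.1 hn
  refine ⟨closure (Metric.ball x (ε / 2)), ?_, ?_, ?_⟩
  · exact mem_of_superset (Metric.ball_mem_nhds x (by linarith)) subset_closure
  · calc closure (Metric.ball x (ε / 2)) ⊆ Metric.closedBall x (ε / 2) :=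
        closure_ball_subset_closedBall
      _ ⊆ Metric.ball x ε := Metric.closedBall_subset_ball (by linarith)
      _ ⊆ n := hball
  · exact TotallyBounded.isCompact_of_isClosed
      ((stmt15_key μ hμ x (ε / 2)).closure) isClosed_closure
end

section
/- Let (X,δ) be a nonempty metric space carrying a uniformly bounded Borel measure μ which satisfies the volume doubling property: there is a constant A ≥ 1 with μ(B(x,2r)) ≤ A·μ(B(x,r)) for all x ∈ X and r > 0. Then d∞(X) ≤ log₂ A; in particular X has finite asymptotic dimension. -/
open Metric Filter Topology Set

/-!
A maximal `1/2`-separated subset of `B(x, R)` covers it by balls of radius `1`, and the balls of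
radius `1/4` around its points are disjoint and contained in `B(x, R + 1/4)`. Iterating the
doubling inequality gives `μ(B(x, R + 1/4)) ≤ (10 R)^{log₂ A} μ(B(x, 1/4))`, so uniform
boundedness at radius `1/4` bounds the number of balls by `K R^{log₂ A}`, and
`log n₁(B(x, R)) / log R ≤ log₂ A + log K / log R`.
-/

open MeasureTheory
open scoped ENNReal NNReal

section Covering

variable {X : Type*} [MetricSpace X]

lemma one_le_coverNum {r : ℝ} {Ω : Set X} (hΩ : Ω.Nonempty) : 1 ≤ coverNum r Ω := by
  refine le_sInf ?_
  rintro _ ⟨s, hs, rfl⟩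
  obtain ⟨y, hy⟩ := hΩ
  obtain ⟨z, hz, -⟩ := mem_iUnion₂.1 (hs hy)
  show (1 : ℕ∞) ≤ s.card
  exact_mod_cast Finset.card_pos.2 ⟨z, hz⟩

lemma coverNum_le_externalCoveringNumber {r : ℝ} {ε : ℝ≥0} (hεr : (ε : ℝ) < r)
    (Ω : Set X) :
    coverNum r Ω ≤ externalCoveringNumber ε Ω := by
  refine le_iInf₂ fun C hC => ?_
  rcases C.finite_or_infinite with hfin | hinf
  · rw [hfin.encard_eq_coe_toFinset_card]
    refine sInf_le ⟨hfin.toFinset, ?_, rfl⟩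
    simp only [mem_ofPred_eq, Set.Finite.mem_toFinset]
    exact (isCover_iff_subset_iUnion_closedBall.1 hC).trans
      (iUnion₂_mono fun y _ => closedBall_subset_ball hεr)
  · simp [hinf.encard_eq]

lemma coverNum_le_packingNumber {r : ℝ} {ε : ℝ≥0} (hεr : (ε : ℝ) < r) (Ω : Set X) :
    coverNum r Ω ≤ packingNumber ε Ω :=
  (coverNum_le_externalCoveringNumber hεr Ω).trans <|
    (externalCoveringNumber_le_coveringNumber ε Ω).trans (coveringNumber_le_packingNumber ε Ω)

end Covering

lemma packingNumber_le_of_card_le {X : Type*} [PseudoEMetricSpace X] {ε : ℝ≥0} {Ω : Set X}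
    {M : ℕ} (h : ∀ s : Finset X, ↑s ⊆ Ω → IsSeparated (ε : ℝ≥0∞) (s : Set X) → s.card ≤ M) :
    packingNumber ε Ω ≤ M := by
  refine iSup₂_le fun C hC => iSup_le fun hsep => ?_
  by_contra! hlt
  obtain ⟨t, htC, ht⟩ := Set.exists_subset_encard_eq (Order.add_one_le_of_lt hlt)
  have hfin : t.Finite := Set.finite_of_encard_eq_coe ht
  have hcard := h hfin.toFinset (by simpa using htC.trans hC) (by simpa using hsep.subset htC)
  rw [hfin.encard_eq_coe_toFinset_card] at ht
  norm_cast at ht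
  omega

section Doubling

variable {X : Type*} [PseudoMetricSpace X] [MeasurableSpace X] {μ : Measure X}

lemma measure_ball_two_pow_mul_le {D : ℝ≥0∞}
    (hdouble : ∀ (x : X) (r : ℝ), 0 < r → μ (ball x (2 * r)) ≤ D * μ (ball x r))
    (x : X) (k : ℕ) {r : ℝ} (hr : 0 < r) :
    μ (ball x (2 ^ k * r)) ≤ D ^ k * μ (ball x r) := by
  induction k with
  | zero => simp
  | succ k ih =>
    calc μ (ball x (2 ^ (k + 1) * r)) = μ (ball x (2 * (2 ^ k * r))) := by ring_nf
      _ ≤ D * μ (ball x (2 ^ k * r)) := hdouble x _ (by positivity)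
      _ ≤ D * (D ^ k * μ (ball x r)) := by gcongr
      _ = D ^ (k + 1) * μ (ball x r) := by ring

lemma measure_ball_le_rpow_mul_measure_ball {A : ℝ} (hA : 1 ≤ A)
    (hdouble : ∀ (x : X) (r : ℝ), 0 < r →
      μ (ball x (2 * r)) ≤ ENNReal.ofReal A * μ (ball x r))
    (x : X) {r R : ℝ} (hr : 0 < r) (hrR : r ≤ R) :
    μ (ball x R) ≤ ENNReal.ofReal ((2 * R / r) ^ Real.logb 2 A) * μ (ball x r) := by
  set L := Real.logb 2 A
  set k := ⌈Real.logb 2 (R / r)⌉₊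
  have hRr : 1 ≤ R / r := (one_le_div hr).2 hrR
  have hk : (k : ℝ) < Real.logb 2 (R / r) + 1 :=
    Nat.ceil_lt_add_one (Real.logb_nonneg one_lt_two hRr)
  have hR_le : R ≤ 2 ^ k * r := by
    rw [← div_le_iff₀ hr, ← Real.rpow_natCast]
    calc R / r = 2 ^ Real.logb 2 (R / r) :=
          (Real.rpow_logb two_pos (by norm_num) (by linarith)).symm
      _ ≤ 2 ^ (k : ℝ) := Real.rpow_le_rpow_of_exponent_le one_le_two (Nat.le_ceil _)
  have h2k : (2 : ℝ) ^ k ≤ 2 * R / r := by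
    rw [← Real.rpow_natCast]
    calc (2 : ℝ) ^ (k : ℝ) ≤ 2 ^ (Real.logb 2 (R / r) + 1) :=
          Real.rpow_le_rpow_of_exponent_le one_le_two hk.le
      _ = 2 * R / r := by
        rw [Real.rpow_add two_pos, Real.rpow_logb two_pos (by norm_num) (by linarith),
          Real.rpow_one, mul_div_assoc, mul_comm]
  have hAk : A ^ k = ((2 : ℝ) ^ k) ^ L := by
    rw [← Real.rpow_natCast, ← Real.rpow_natCast 2, ← Real.rpow_mul zero_le_two, mul_comm,
      Real.rpow_mul zero_le_two, Real.rpow_logb two_pos (by norm_num) (by linarith)]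
  calc μ (ball x R) ≤ μ (ball x (2 ^ k * r)) := measure_mono (ball_subset_ball hR_le)
    _ ≤ ENNReal.ofReal A ^ k * μ (ball x r) := measure_ball_two_pow_mul_le hdouble x k hr
    _ = ENNReal.ofReal ((2 ^ k) ^ L) * μ (ball x r) := by
      rw [← ENNReal.ofReal_pow (by linarith), hAk]
    _ ≤ ENNReal.ofReal ((2 * R / r) ^ L) * μ (ball x r) := by
      gcongr
      exact Real.logb_nonneg one_lt_two hA

lemma card_mul_le_measure_ball_add [OpensMeasurableSpace X] {s : Finset X} {x : X} {R ρ : ℝ}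
    {ε : ℝ≥0} {m : ℝ≥0∞} (hs : (s : Set X) ⊆ ball x R) (hρε : 2 * ρ ≤ ε)
    (hsep : IsSeparated (ε : ℝ≥0∞) (s : Set X)) (hm : ∀ y ∈ s, m ≤ μ (ball y ρ)) :
    s.card * m ≤ μ (ball x (R + ρ)) := by
  have hdisj : (s : Set X).PairwiseDisjoint fun y => ball y ρ := fun y hy z hz hyz => by
    have hyz : (ε : ℝ≥0∞) < edist y z := hsep hy hz hyz
    rw [edist_nndist, ENNReal.coe_lt_coe, ← NNReal.coe_lt_coe, coe_nndist] at hyz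
    exact ball_disjoint_ball (by linarith)
  calc s.card * m = ∑ y ∈ s, m := by rw [Finset.sum_const, nsmul_eq_mul]
    _ ≤ ∑ y ∈ s, μ (ball y ρ) := Finset.sum_le_sum hm
    _ = μ (⋃ y ∈ s, ball y ρ) :=
      (measure_biUnion_finset hdisj fun _ _ => measurableSet_ball).symm
    _ ≤ μ (ball x (R + ρ)) := measure_mono <| iUnion₂_subset fun y hy =>
      ball_subset_ball' (by rw [add_comm]; exact add_le_add_left (mem_ball.1 (hs hy)).le ρ)

end Doubling

lemma elog_le_log_of_le_floor {n : ℕ∞} {b : ℝ} (h1 : 1 ≤ n) (hb : n ≤ ⌊b⌋₊) :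
    elog n ≤ Real.log b := by
  obtain ⟨m, rfl⟩ := ENat.ne_top_iff_exists.1 (ne_top_of_le_ne_top (ENat.natCast_ne_top _) hb)
  have hm : m ≠ 0 := by rintro rfl; simp at h1
  have hmb : (m : ℝ) ≤ b := (Nat.le_floor_iff' hm).1 (by exact_mod_cast hb)
  rw [elog, if_neg (ENat.natCast_ne_top m), ENat.toNat_natCast, EReal.coe_le_coe_iff]
  exact Real.log_le_log (by positivity) hmb

lemma asympDim_le_of_coverNum_le {X : Type*} [MetricSpace X] {x : X} {r K d : ℝ}
    (hr : 0 < r) (h : ∀ᶠ R in atTop, coverNum r (ball x R) ≤ ⌊K * R ^ d⌋₊) :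
    asympDim x ≤ d := by
  have hbound : ∀ᶠ R in atTop, ((Real.log R)⁻¹ : EReal) * elog (coverNum r (ball x R)) ≤
      ((d + Real.log K / Real.log R : ℝ) : EReal) := by
    filter_upwards [h, eventually_gt_atTop 1] with R hcov hR
    have hlogR : 0 < Real.log R := Real.log_pos hR
    have hcov1 := one_le_coverNum (r := r) ⟨x, mem_ball_self (by linarith : (0 : ℝ) < R)⟩
    have hK : K ≠ 0 := by
      rintro rfl
      have := hcov1.trans hcov
      simp at this
    have hlog := elog_le_log_of_le_floor hcov1 hcov
    rw [Real.log_mul hK (by positivity), Real.log_rpow (by linarith)] at hlog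
    calc ((Real.log R)⁻¹ : EReal) * elog (coverNum r (ball x R))
        ≤ ((Real.log R)⁻¹ : EReal) * ((Real.log K + d * Real.log R : ℝ) : EReal) :=
          mul_le_mul_of_nonneg_left hlog <| by
            rw [← EReal.coe_inv]; exact_mod_cast (inv_pos.2 hlogR).le
      _ = ((d + Real.log K / Real.log R : ℝ) : EReal) := by
        rw [← EReal.coe_inv, ← EReal.coe_mul]
        congr 1
        field_simp
        ring
  have hlim : Tendsto (fun R => d + Real.log K / Real.log R) atTop (𝓝 d) := by
    simpa using tendsto_const_nhds.add (tendsto_const_nhds.div_atTop Real.tendsto_log_atTop)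
  calc asympDim x ≤ limsup (fun R : ℝ => ((Real.log R)⁻¹ : EReal) *
        elog (coverNum r (ball x R))) atTop := iInf₂_le r hr
    _ ≤ limsup (fun R => ((d + Real.log K / Real.log R : ℝ) : EReal)) atTop :=
      limsup_le_limsup hbound
    _ = d := (EReal.tendsto_coe.2 hlim).limsup_eq

lemma UnifBounded.exists_le_measure_ball {X : Type*} [MetricSpace X] [MeasurableSpace X]
    {μ : Measure X} (hμ : UnifBounded μ) {r : ℝ} (hr : 0 < r) :
    ∃ c : ℝ≥0, 0 < c ∧ ∀ y, (c : ℝ≥0∞) ≤ μ (ball y r) := by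
  obtain ⟨c, hc0, hc⟩ := ENNReal.lt_iff_exists_nnreal_btwn.1 (hμ r hr).1
  exact ⟨c, ENNReal.coe_pos.1 hc0, fun y => hc.le.trans (iInf_le _ y)⟩

lemma UnifBounded.exists_measure_ball_le {X : Type*} [MetricSpace X] [MeasurableSpace X]
    {μ : Measure X} (hμ : UnifBounded μ) {r : ℝ} (hr : 0 < r) :
    ∃ C : ℝ≥0, ∀ y, μ (ball y r) ≤ C := by
  obtain ⟨C, hC, -⟩ := ENNReal.lt_iff_exists_nnreal_btwn.1 (hμ r hr).2
  exact ⟨C, fun y => (le_iSup _ y).trans hC.le⟩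

lemma coverNum_ball_le_of_doubling {X : Type*} [MetricSpace X] [MeasurableSpace X]
    [OpensMeasurableSpace X] {μ : Measure X} {A : ℝ} (hA : 1 ≤ A)
    (hdouble : ∀ (x : X) (r : ℝ), 0 < r →
      μ (ball x (2 * r)) ≤ ENNReal.ofReal A * μ (ball x r))
    {c C : ℝ≥0} (hc : 0 < c) (hc_le : ∀ y, (c : ℝ≥0∞) ≤ μ (ball y (1 / 4)))
    (hC : ∀ y, μ (ball y (1 / 4)) ≤ C) (x : X) {R : ℝ} (hR : 1 ≤ R) :
    coverNum 1 (ball x R) ≤ ⌊10 ^ Real.logb 2 A * C / c * R ^ Real.logb 2 A⌋₊ := by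
  set L := Real.logb 2 A
  refine (coverNum_le_packingNumber (ε := 1 / 2) (by norm_num) _).trans <|
    packingNumber_le_of_card_le fun s hs hsep => Nat.le_floor ?_
  have hmeasure : (s.card : ℝ≥0∞) * c ≤ ENNReal.ofReal ((10 * R) ^ L) * C :=
    calc (s.card : ℝ≥0∞) * c ≤ μ (ball x (R + 1 / 4)) :=
          card_mul_le_measure_ball_add hs (by norm_num) hsep fun y _ => hc_le y
      _ ≤ ENNReal.ofReal ((2 * (R + 1 / 4) / (1 / 4)) ^ L) * μ (ball x (1 / 4)) :=
          measure_ball_le_rpow_mul_measure_ball hA hdouble x (by norm_num) (by linarith)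
      _ ≤ ENNReal.ofReal ((10 * R) ^ L) * C := by
        gcongr
        · exact Real.logb_nonneg one_lt_two hA
        · linarith
        · exact hC x
  have hreal : (s.card : ℝ) * c ≤ (10 * R) ^ L * C := by
    rwa [← ENNReal.ofReal_coe_nnreal, ← ENNReal.ofReal_natCast,
      ← ENNReal.ofReal_mul (by positivity), ← ENNReal.ofReal_coe_nnreal,
      ← ENNReal.ofReal_mul (by positivity),
      ENNReal.ofReal_le_ofReal_iff (by positivity)] at hmeasure
  rw [Real.mul_rpow (by norm_num) (by linarith)] at hreal
  rw [div_mul_eq_mul_div, le_div_iff₀ (by exact_mod_cast hc)]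
  linarith

theorem stmt17_general {X : Type*} [MetricSpace X] [MeasurableSpace X] [BorelSpace X]
    (μ : MeasureTheory.Measure X) (hμ : UnifBounded μ) (A : ℝ) (hA : 1 ≤ A)
    (hdouble : ∀ (x : X) (r : ℝ), 0 < r →
      μ (Metric.ball x (2 * r)) ≤ ENNReal.ofReal A * μ (Metric.ball x r)) :
    asympDimSpace X ≤ ((Real.log A / Real.log 2 : ℝ) : EReal) ∧
    asympDimSpace X < ⊤ := by
  obtain ⟨c, hc, hc_le⟩ := hμ.exists_le_measure_ball (r := 1 / 4) (by norm_num)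
  obtain ⟨C, hC⟩ := hμ.exists_measure_ball_le (r := 1 / 4) (by norm_num)
  have hdim : asympDimSpace X ≤ (Real.logb 2 A : EReal) := iSup_le fun x =>
    asympDim_le_of_coverNum_le one_pos <| eventually_atTop.2
      ⟨1, fun R hR => coverNum_ball_le_of_doubling hA hdouble hc hc_le hC x hR⟩
  exact ⟨hdim, hdim.trans_lt (EReal.coe_lt_top _)⟩

/-- If a uniformly bounded Borel measure on `X` satisfies the volume doubling property
`μ(B(x,2r)) ≤ A μ(B(x,r))`, then `d∞(X) ≤ log₂ A`; in particular `X` has finite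
asymptotic dimension. -/
theorem stmt17 {X : Type*} [MetricSpace X] [MeasurableSpace X] [BorelSpace X] [Nonempty X]
    (μ : MeasureTheory.Measure X) (hμ : UnifBounded μ) (A : ℝ) (hA : 1 ≤ A)
    (hdouble : ∀ (x : X) (r : ℝ), 0 < r →
      μ (Metric.ball x (2 * r)) ≤ ENNReal.ofReal A * μ (Metric.ball x r)) :
    asympDimSpace X ≤ ((Real.log A / Real.log 2 : ℝ) : EReal) ∧
    asympDimSpace X < ⊤ :=
  stmt17_general μ hμ A hA hdouble
end

section
/- Let λ : [0,∞) → (0,∞) be a nonincreasing, right-continuous function with lim_{s→∞} λ(s) = 0, and define its generalized inverse μ(t) := inf{s ≥ 0 : λ(s) ≤ t} for t > 0 (so μ(t) < ∞ for every t > 0 and μ(t) → ∞ as t → 0⁺). Then liminf_{t→0⁺} (log μ(t))/(log(1/t)) = ( limsup_{s→∞} (log λ(s))/(log(1/s)) )⁻¹, where both sides may take the values 0 and ∞ with the conventions 0⁻¹ = ∞ and ∞⁻¹ = 0. -/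
open Filter Set

/-- The inverse on `EReal` with the conventions `0⁻¹ = ∞` and `∞⁻¹ = 0`. -/
noncomputable def einv (x : EReal) : EReal :=
  if x = 0 then ⊤ else if x = ⊤ then 0 else ((x.toReal)⁻¹ : ℝ)

/-!
If `λ(s) < s^{-a}` for arbitrarily large `s`, then `t = λ(s)` has `μ(t) ≤ s < t^{-1/a}`,
so `log μ(t) / log(1/t) < 1/a` for arbitrarily small `t`. If instead `λ(s) > s^{-a}` for all
`s ≥ S`, then for `t < λ(S)` every `s` with `λ(s) ≤ t` lies beyond `S` and satisfies
`s^{-a} < t`, so `μ(t) ≥ t^{-1/a}`. Hence `a < limsup ⇒ liminf ≤ 1/a` and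
`limsup < a ⇒ liminf ≥ 1/a`, which pins the liminf down to the inverse of the limsup once both
are known to be nonnegative.
-/

lemma pos_and_coe_inv_lt_of_einv_lt {A : EReal} (hA : 0 ≤ A) {z : ℝ} (h : einv A < z) :
    0 < z ∧ ((z⁻¹ : ℝ) : EReal) < A := by
  induction A using EReal.rec with
  | bot => exact absurd hA (by simp)
  | top =>
    have hz : 0 < z := by simpa [einv] using h
    exact ⟨hz, EReal.coe_lt_top _⟩
  | coe r =>
    have hr : r ≠ 0 := by rintro rfl; simp [einv] at h
    have hr0 : 0 < r := lt_of_le_of_ne (EReal.coe_nonneg.mp hA) (Ne.symm hr)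
    have h' : r⁻¹ < z := by simpa [einv, hr] using h
    have hz : 0 < z := (inv_pos.mpr hr0).trans h'
    exact ⟨hz, EReal.coe_lt_coe_iff.mpr ((inv_lt_comm₀ hr0 hz).mp h')⟩

lemma lt_coe_inv_of_lt_einv {A : EReal} (hA : 0 ≤ A) {z : ℝ} (hz : 0 < z)
    (h : (z : EReal) < einv A) : A < ((z⁻¹ : ℝ) : EReal) := by
  induction A using EReal.rec with
  | bot => exact absurd hA (by simp)
  | top => simp [einv] at h; linarith
  | coe r =>
    rcases (EReal.coe_nonneg.mp hA).eq_or_lt with rfl | hr0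
    · simpa using hz
    · have h' : z < r⁻¹ := by simpa [einv, hr0.ne'] using h
      exact EReal.coe_lt_coe_iff.mpr ((lt_inv_comm₀ hz hr0).mp h')

lemma eq_einv_of_forall {L A : EReal} (hL : 0 ≤ L) (hA : 0 ≤ A)
    (hup : ∀ a : ℝ, 0 < a → (a : EReal) < A → L ≤ ((a⁻¹ : ℝ) : EReal))
    (hlow : ∀ a : ℝ, 0 < a → A < a → ((a⁻¹ : ℝ) : EReal) ≤ L) :
    L = einv A := by
  apply le_antisymm
  · refine EReal.le_of_forall_lt_iff_le.mp fun z hz => ?_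
    obtain ⟨hz0, hlt⟩ := pos_and_coe_inv_lt_of_einv_lt hA hz
    simpa using hup z⁻¹ (inv_pos.mpr hz0) hlt
  · refine EReal.ge_of_forall_gt_iff_ge.mp fun z hz => ?_
    rcases le_or_gt z 0 with hz0 | hz0
    · exact (EReal.coe_nonpos.mpr hz0).trans hL
    · simpa using hlow z⁻¹ (inv_pos.mpr hz0) (by simpa using lt_coe_inv_of_lt_einv hA hz0 hz)

noncomputable def genInv (lam : ℝ → ℝ) (t : ℝ) : ℝ :=
  sInf {s : ℝ | 0 ≤ s ∧ lam s ≤ t}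

noncomputable def logRatio (f : ℝ → ℝ) (x : ℝ) : ℝ :=
  Real.log (f x) / Real.log (1 / x)

lemma coe_logRatio (f : ℝ → ℝ) (x : ℝ) :
    ((logRatio f x : ℝ) : EReal) =
      ((Real.log (1 / x))⁻¹ : EReal) * ((Real.log (f x) : ℝ) : EReal) := by
  rw [logRatio, div_eq_inv_mul, EReal.coe_mul, EReal.coe_inv]

lemma log_one_div_neg {s : ℝ} (hs : 1 < s) : Real.log (1 / s) < 0 := by
  rw [one_div, Real.log_inv, neg_neg_iff_pos]
  exact Real.log_pos hs

lemma log_one_div_pos {t : ℝ} (ht0 : 0 < t) (ht1 : t < 1) : 0 < Real.log (1 / t) := by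
  rw [one_div, Real.log_inv, neg_pos]
  exact Real.log_neg ht0 ht1

section GenInv

variable {lam : ℝ → ℝ}

lemma genInv_nonneg (t : ℝ) : 0 ≤ genInv lam t :=
  Real.sInf_nonneg fun _ hx => hx.1

lemma genInv_le {s t : ℝ} (hs : 0 ≤ s) (hst : lam s ≤ t) : genInv lam t ≤ s :=
  csInf_le ⟨0, fun _ hx => hx.1⟩ ⟨hs, hst⟩

lemma exists_apply_le_of_tendsto (hlim : Tendsto lam atTop (nhds 0)) {t : ℝ} (ht : 0 < t) :
    ∃ s, 0 ≤ s ∧ lam s ≤ t := by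
  obtain ⟨s, hlt, hs⟩ := ((hlim.eventually_lt_const ht).and (eventually_ge_atTop 0)).exists
  exact ⟨s, hs, hlt.le⟩

lemma le_genInv_of_lt_apply (hmono : AntitoneOn lam (Ici 0))
    (hlim : Tendsto lam atTop (nhds 0)) {S t c : ℝ} (hS : 0 ≤ S) (ht0 : 0 < t) (ht : t < lam S)
    (hc : ∀ s, S < s → lam s ≤ t → c ≤ s) : c ≤ genInv lam t := by
  obtain ⟨s₀, hs₀, hs₀t⟩ := exists_apply_le_of_tendsto hlim ht0
  refine le_csInf ⟨s₀, hs₀, hs₀t⟩ fun s ⟨hs, hst⟩ => hc s ?_ hst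
  exact hmono.reflect_lt hs hS (hst.trans_lt ht)

lemma logRatio_genInv_apply_le_inv {a s : ℝ} (ha : 0 < a) (hs : 1 < s)
    (h : a < logRatio lam s) : logRatio (genInv lam) (lam s) ≤ a⁻¹ := by
  have hlogs : 0 < Real.log s := Real.log_pos hs
  have hdecay : a * Real.log s < Real.log (1 / lam s) := by
    have := (lt_div_iff_of_neg (log_one_div_neg hs)).mp h
    rw [one_div, Real.log_inv] at this ⊢
    linarith
  have hmu : Real.log (genInv lam (lam s)) ≤ Real.log s := by
    rcases (genInv_nonneg (lam := lam) (lam s)).eq_or_lt with h0 | h0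
    · rw [← h0, Real.log_zero]
      exact hlogs.le
    · exact Real.log_le_log h0 (genInv_le (by linarith) le_rfl)
  have hden : 0 < Real.log (1 / lam s) := (mul_pos ha hlogs).trans hdecay
  rw [logRatio, div_le_iff₀ hden]
  calc Real.log (genInv lam (lam s)) ≤ Real.log s := hmu
    _ = a⁻¹ * (a * Real.log s) := by field_simp
    _ ≤ a⁻¹ * Real.log (1 / lam s) := by gcongr

lemma inv_le_logRatio_genInv (hpos : ∀ s : ℝ, 0 ≤ s → 0 < lam s)
    (hmono : AntitoneOn lam (Ici 0)) (hlim : Tendsto lam atTop (nhds 0)) {a S t : ℝ}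
    (ha : 0 < a) (hS : 1 < S) (hbound : ∀ s, S ≤ s → logRatio lam s < a)
    (ht0 : 0 < t) (ht1 : t < 1) (htS : t < lam S) : a⁻¹ ≤ logRatio (genInv lam) t := by
  have hden := log_one_div_pos ht0 ht1
  have hmu : Real.exp (a⁻¹ * Real.log (1 / t)) ≤ genInv lam t := by
    refine le_genInv_of_lt_apply hmono hlim (by linarith) ht0 htS fun s hSs hst => ?_
    have hs : 1 < s := hS.trans hSs
    have hdecay := (div_lt_iff_of_neg (log_one_div_neg hs)).mp (hbound s hSs.le)
    have hlog : Real.log (lam s) ≤ Real.log t := Real.log_le_log (hpos s (by linarith)) hst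
    rw [one_div, Real.log_inv] at hdecay ⊢
    rw [← Real.le_log_iff_exp_le (by linarith), inv_mul_le_iff₀ ha]
    linarith
  have hlogmu : a⁻¹ * Real.log (1 / t) ≤ Real.log (genInv lam t) :=
    (Real.le_log_iff_exp_le ((Real.exp_pos _).trans_le hmu)).mpr hmu
  rw [logRatio, le_div_iff₀ hden]
  linarith

lemma limsup_logRatio_nonneg (hpos : ∀ s : ℝ, 0 ≤ s → 0 < lam s)
    (hlim : Tendsto lam atTop (nhds 0)) :
    0 ≤ limsup (fun s => (logRatio lam s : EReal)) atTop := by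
  refine le_limsup_of_frequently_le (Eventually.frequently ?_)
  filter_upwards [eventually_gt_atTop 1, hlim.eventually_lt_const one_pos] with s hs hlam
  exact EReal.coe_nonneg.mpr <| div_nonneg_of_nonpos
    (Real.log_nonpos (hpos s (by linarith)).le hlam.le) (log_one_div_neg hs).le

lemma liminf_logRatio_genInv_nonneg (hpos : ∀ s : ℝ, 0 ≤ s → 0 < lam s)
    (hmono : AntitoneOn lam (Ici 0)) (hlim : Tendsto lam atTop (nhds 0)) :
    0 ≤ liminf (fun t => (logRatio (genInv lam) t : EReal)) (nhdsWithin 0 (Ioi 0)) := by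
  refine le_liminf_of_le (by isBoundedDefault) ?_
  filter_upwards [Ioo_mem_nhdsGT (lt_min (hpos 1 zero_le_one) one_pos)] with t ⟨ht0, ht⟩
  have hmu : 1 ≤ genInv lam t :=
    le_genInv_of_lt_apply hmono hlim zero_le_one ht0 (ht.trans_le (min_le_left _ _))
      fun _ hs _ => hs.le
  exact EReal.coe_nonneg.mpr <| div_nonneg (Real.log_nonneg hmu)
    (log_one_div_pos ht0 (ht.trans_le (min_le_right _ _))).le

lemma liminf_logRatio_genInv_le_inv (hpos : ∀ s : ℝ, 0 ≤ s → 0 < lam s)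
    (hlim : Tendsto lam atTop (nhds 0)) {a : ℝ} (ha : 0 < a)
    (h : (a : EReal) < limsup (fun s => (logRatio lam s : EReal)) atTop) :
    liminf (fun t => (logRatio (genInv lam) t : EReal)) (nhdsWithin 0 (Ioi 0)) ≤
      (a⁻¹ : ℝ) := by
  have hlim' : Tendsto lam atTop (nhdsWithin 0 (Ioi 0)) :=
    tendsto_nhdsWithin_iff.mpr ⟨hlim, (eventually_ge_atTop 0).mono hpos⟩
  refine liminf_le_of_frequently_le (hlim'.frequently ?_)
  refine ((frequently_lt_of_lt_limsup (by isBoundedDefault) h).and_eventually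
    (eventually_gt_atTop 1)).mono fun s ⟨hs, hs1⟩ => ?_
  exact EReal.coe_le_coe_iff.mpr
    (logRatio_genInv_apply_le_inv ha hs1 (EReal.coe_lt_coe_iff.mp hs))

lemma inv_le_liminf_logRatio_genInv (hpos : ∀ s : ℝ, 0 ≤ s → 0 < lam s)
    (hmono : AntitoneOn lam (Ici 0)) (hlim : Tendsto lam atTop (nhds 0)) {a : ℝ} (ha : 0 < a)
    (h : limsup (fun s => (logRatio lam s : EReal)) atTop < a) :
    ((a⁻¹ : ℝ) : EReal) ≤
      liminf (fun t => (logRatio (genInv lam) t : EReal)) (nhdsWithin 0 (Ioi 0)) := by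
  obtain ⟨S, hS⟩ := eventually_atTop.mp
    ((eventually_lt_of_limsup_lt h).and (eventually_gt_atTop 1))
  have hS1 : 1 < S := (hS S le_rfl).2
  refine le_liminf_of_le (by isBoundedDefault) ?_
  filter_upwards [Ioo_mem_nhdsGT (lt_min (hpos S (by linarith)) one_pos)] with t ⟨ht0, ht⟩
  exact EReal.coe_le_coe_iff.mpr <| inv_le_logRatio_genInv hpos hmono hlim ha hS1
    (fun s hs => EReal.coe_lt_coe_iff.mp (hS s hs).1) ht0 (ht.trans_le (min_le_right _ _))
    (ht.trans_le (min_le_left _ _))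

end GenInv

theorem stmt19_general (lam : ℝ → ℝ) (hpos : ∀ s : ℝ, 0 ≤ s → 0 < lam s)
    (hmono : AntitoneOn lam (Set.Ici 0))
    (hlim : Filter.Tendsto lam Filter.atTop (nhds 0)) :
    Filter.liminf
        (fun t : ℝ => ((Real.log (1 / t))⁻¹ : EReal) *
          ((Real.log (sInf {s : ℝ | 0 ≤ s ∧ lam s ≤ t}) : ℝ) : EReal))
        (nhdsWithin (0 : ℝ) (Set.Ioi 0)) =
      einv (Filter.limsup
        (fun s : ℝ => ((Real.log (1 / s))⁻¹ : EReal) * ((Real.log (lam s) : ℝ) : EReal))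
        Filter.atTop) := by
  have hμ : (fun t : ℝ => ((Real.log (1 / t))⁻¹ : EReal) *
      ((Real.log (sInf {s : ℝ | 0 ≤ s ∧ lam s ≤ t}) : ℝ) : EReal)) =
      fun t => ((logRatio (genInv lam) t : ℝ) : EReal) :=
    funext fun t => (coe_logRatio (genInv lam) t).symm
  simp only [hμ, ← coe_logRatio]
  exact eq_einv_of_forall (liminf_logRatio_genInv_nonneg hpos hmono hlim)
    (limsup_logRatio_nonneg hpos hlim)
    (fun _ ha h => liminf_logRatio_genInv_le_inv hpos hlim ha h)
    (fun _ ha h => inv_le_liminf_logRatio_genInv hpos hmono hlim ha h)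

/-- The key lemma in Theorem 2.2.4: for a nonincreasing, right-continuous, positive
function `λ` on `[0,∞)` tending to `0` at infinity, with generalized inverse
`μ(t) = inf {s ≥ 0 : λ(s) ≤ t}`, one has
`liminf_{t→0⁺} log μ(t) / log(1/t) = (limsup_{s→∞} log λ(s) / log(1/s))⁻¹`,
where both sides may take the values `0` and `∞`, with `0⁻¹ = ∞` and `∞⁻¹ = 0`. -/
theorem stmt19 (lam : ℝ → ℝ) (hpos : ∀ s : ℝ, 0 ≤ s → 0 < lam s)
    (hmono : AntitoneOn lam (Set.Ici 0))
    (hrc : ∀ s : ℝ, 0 ≤ s → ContinuousWithinAt lam (Set.Ici s) s)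
    (hlim : Filter.Tendsto lam Filter.atTop (nhds 0)) :
    Filter.liminf
        (fun t : ℝ => ((Real.log (1 / t))⁻¹ : EReal) *
          ((Real.log (sInf {s : ℝ | 0 ≤ s ∧ lam s ≤ t}) : ℝ) : EReal))
        (nhdsWithin (0 : ℝ) (Set.Ioi 0)) =
      einv (Filter.limsup
        (fun s : ℝ => ((Real.log (1 / s))⁻¹ : EReal) * ((Real.log (lam s) : ℝ) : EReal))
        Filter.atTop) :=
  stmt19_general lam hpos hmono hlim
end
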